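/- Let G be a finite group acting on a finite set A and let k ≥ 0 be an integer. Then |G| divides Σ |A^{⟨g_0, g_1, …, g_k⟩}|, where the sum runs over all (k+1)-tuples (g_0, g_1, …, g_k) of elements of G that pairwise commute (g_i g_j = g_j g_i for all i, j), ⟨g_0, …, g_k⟩ is the subgroup of G generated by g_0, …, g_k, and A^L = {a ∈ A : la = a for all l ∈ L}. In other words, the k-th order Euler characteristic χ^{(k)}(A, G) = (1/|G|) Σ |A^{⟨g_0, …, g_k⟩}| is an integer. -/

import Mathlib

/-!
Let `X_k` be the set of pairs (pairwise commuting `k`-tuple in `G`, point of `A` fixed by every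
entry), on which `G` acts by simultaneous conjugation of the tuple and by its action on `A`.
The sum in the theorem counts `X_{k+1}`, and splitting off the first entry `g` of a tuple
identifies `X_{k+1}` with the pairs `(g, x) ∈ G × X_k` such that `g • x = x`.
By Burnside's lemma these pairs number `|G|` times the number of `G`-orbits of `X_k`.
-/

open MulAction Subgroup

lemma card_dvd_card_sigma_fixedBy (G X : Type*) [Group G] [MulAction G X] :
    Nat.card G ∣ Nat.card (Σ g : G, fixedBy X g) := by
  rw [Nat.card_congr (sigmaFixedByEquivOrbitsProdGroup G X), Nat.card_prod]
  exact dvd_mul_left _ _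

section

variable {G A : Type*} [Group G] [MulAction G A]

lemma mem_fixedPoints_closure_iff {s : Set G} {a : A} :
    a ∈ fixedPoints (closure s) A ↔ ∀ g ∈ s, g • a = a :=
  ⟨fun h g hg => h ⟨g, subset_closure hg⟩, fun h g => (closure_le (stabilizer G a)).mpr h g.2⟩

structure IsCommutingFixed {k : ℕ} (gs : Fin k → G) (a : A) : Prop where
  commute : ∀ i j, Commute (gs i) (gs j)
  smul_eq : ∀ i, gs i • a = a

lemma isCommutingFixed_iff {k : ℕ} {gs : Fin k → G} {a : A} :
    IsCommutingFixed gs a ↔ (∀ i j, Commute (gs i) (gs j)) ∧ ∀ i, gs i • a = a :=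
  ⟨fun h => ⟨h.1, h.2⟩, fun h => ⟨h.1, h.2⟩⟩

lemma isCommutingFixed_cons_iff {k : ℕ} {g : G} {gs : Fin k → G} {a : A} :
    IsCommutingFixed (Fin.cons g gs : Fin (k + 1) → G) a ↔
      IsCommutingFixed gs a ∧ (∀ i, Commute g (gs i)) ∧ g • a = a := by
  simp only [isCommutingFixed_iff, Fin.forall_fin_succ, Fin.cons_zero, Fin.cons_succ,
    Commute.refl, true_and, forall_and]
  constructor
  · rintro ⟨⟨-, hg, hgs⟩, ha, hgsa⟩
    exact ⟨⟨hgs, hgsa⟩, hg, ha⟩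
  · rintro ⟨⟨hgs, hgsa⟩, hg, ha⟩
    exact ⟨⟨fun i => (hg i).symm, hg, hgs⟩, ha, hgsa⟩

lemma IsCommutingFixed.tail {k : ℕ} {gs : Fin (k + 1) → G} {a : A} (h : IsCommutingFixed gs a) :
    IsCommutingFixed (Fin.tail gs) a ∧ (∀ i, Commute (gs 0) (Fin.tail gs i)) ∧ gs 0 • a = a :=
  isCommutingFixed_cons_iff.mp (by rwa [Fin.cons_self_tail])

variable (G A) in
abbrev CommutingFixedTuples (k : ℕ) : Type _ :=
  {p : (Fin k → G) × A // IsCommutingFixed p.1 p.2}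

namespace CommutingFixedTuples

variable {k : ℕ}

instance : SMul G (CommutingFixedTuples G A k) where
  smul g p := ⟨(fun i => g * p.1.1 i * g⁻¹, g • p.1.2),
    ⟨fun i j => (p.2.commute i j).conj g, fun i => by simp [mul_smul, p.2.smul_eq i]⟩⟩

@[simp]
lemma coe_smul (g : G) (p : CommutingFixedTuples G A k) :
    (g • p).1 = (fun i => g * p.1.1 i * g⁻¹, g • p.1.2) :=
  rfl

instance : MulAction G (CommutingFixedTuples G A k) where
  one_smul p := Subtype.ext (by simp)
  mul_smul g h p := Subtype.ext (by simp [mul_assoc, mul_smul])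

lemma smul_eq_self_iff {g : G} {p : CommutingFixedTuples G A k} :
    g • p = p ↔ (∀ i, Commute g (p.1.1 i)) ∧ g • p.1.2 = p.1.2 := by
  simp only [Subtype.ext_iff, coe_smul, Prod.ext_iff, funext_iff, mul_inv_eq_iff_eq_mul]
  rfl

def consEquiv :
    CommutingFixedTuples G A (k + 1) ≃ Σ g : G, fixedBy (CommutingFixedTuples G A k) g where
  toFun p :=
    have h := p.2.tail
    ⟨p.1.1 0, ⟨(Fin.tail p.1.1, p.1.2), h.1⟩, smul_eq_self_iff.mpr h.2⟩
  invFun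
    | ⟨g, ⟨(gs, a), h⟩, hg⟩ =>
      ⟨(Fin.cons g gs, a), isCommutingFixed_cons_iff.mpr ⟨h, smul_eq_self_iff.mp hg⟩⟩
  left_inv _ := Subtype.ext (Prod.ext (Fin.cons_self_tail _) rfl)
  right_inv := fun ⟨_, ⟨_, _⟩, _⟩ => rfl

open scoped Classical in
lemma card_eq_sum_card_fixedPoints [Fintype G] [Finite A] :
    Nat.card (CommutingFixedTuples G A k) = ∑ gs : Fin k → G,
      if ∀ i j, Commute (gs i) (gs j) then Nat.card (fixedPoints (closure (Set.range gs)) A)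
      else 0 := by
  rw [Nat.card_congr (Equiv.subtypeProdEquivSigmaSubtype fun gs a => IsCommutingFixed gs a),
    Nat.card_sigma]
  refine Finset.sum_congr rfl fun gs _ => ?_
  split_ifs with hgs
  · refine Nat.card_congr (Equiv.subtypeEquivRight fun a => ?_)
    rw [isCommutingFixed_iff, mem_fixedPoints_closure_iff, Set.forall_mem_range, and_iff_right hgs]
  · have : IsEmpty {a : A // IsCommutingFixed gs a} := ⟨fun a => hgs a.2.commute⟩
    exact Nat.card_of_isEmpty

end CommutingFixedTuples

end

open scoped Classical in
/-- For a finite group `G` acting on a finite set `A` and `k ≥ 0`, the order `|G|` divides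
the sum, over all pairwise commuting `(k+1)`-tuples `(g₀, …, g_k)` of elements of `G`, of
the number of points of `A` fixed by the subgroup `⟨g₀, …, g_k⟩`; i.e. the `k`-th order
Euler characteristic `χ^{(k)}(A, G)` is an integer. -/
theorem card_dvd_sum_commuting_fixed_points (G : Type*) [Group G] [Fintype G]
    (A : Type*) [MulAction G A] [Fintype A] (k : ℕ) :
    Nat.card G ∣ ∑ gs : Fin (k + 1) → G,
      if ∀ i j, Commute (gs i) (gs j) then
        Nat.card (MulAction.fixedPoints (Subgroup.closure (Set.range gs)) A)
      else 0 := by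
  rw [← CommutingFixedTuples.card_eq_sum_card_fixedPoints,
    Nat.card_congr CommutingFixedTuples.consEquiv]
  exact card_dvd_card_sigma_fixedBy G _
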